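/- For f analytic normalized on 𝔻 belonging to K_s((1+(1-2γ)z)/(1-z)) with 0 ≤ γ < 1, the distortion bounds (1-(1-2γ)r)/((1+r)(1+r²)) ≤ |f'(z)| ≤ (1+(1-2γ)r)/((1-r)(1-r²)) hold for |z| = r < 1. -/

import Mathlib

/-!
Write `g z = z G z` and `k z = G z G (-z)`, so that `g z g (-z) = -z² k z` and the subordination
reads `f' z = k z φ (w z)`. Since `g` is starlike of order `1/2`, `p = 1 + z k'/k`, the
starlikeness quotient of the odd function `z k z = -g z g (-z) / z`, has positive real part. As
`p` is even, `(p - 1)/(p + 1)` is an even Schwarz function, hence bounded by `|z|²`, which confines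
`Re p` to `[(1 - r²)/(1 + r²), (1 + r²)/(1 - r²)]`. Integrating `Re (z k'/k) = r ∂ᵣ log |k|` along
the radius gives `1/(1 + r²) ≤ |k z| ≤ 1/(1 - r²)`. By Schwarz's lemma `|w z| ≤ r`, and `φ` maps
the disc of radius `r` onto a disc whose points have modulus between `(1 - (1 - 2γ) r)/(1 + r)`
and `(1 + (1 - 2γ) r)/(1 - r)`.
-/

open Complex Metric Set

lemma one_sub_ne_zero_of_norm_lt_one {u : ℂ} (hu : ‖u‖ < 1) : 1 - u ≠ 0 := by
  rw [sub_ne_zero]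
  rintro rfl
  simp at hu

lemma norm_sub_sq_le_mul_norm_one_sub {u : ℂ} {ρ : ℝ} (hρ0 : 0 ≤ ρ) (hρ1 : ρ ≤ 1)
    (hu : ‖u‖ ≤ ρ) : ‖u - (ρ : ℂ) ^ 2‖ ≤ ρ * ‖1 - u‖ := by
  have hnorm : u.re * u.re + u.im * u.im ≤ ρ ^ 2 := by
    rw [← normSq_apply, ← Complex.sq_norm]; gcongr
  have hsq : ‖u - (ρ : ℂ) ^ 2‖ ^ 2 ≤ (ρ * ‖1 - u‖) ^ 2 := by
    rw [mul_pow, Complex.sq_norm, Complex.sq_norm, normSq_apply, normSq_apply]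
    simp only [sub_re, sub_im, one_re, one_im, ← ofReal_pow, ofReal_re, ofReal_im]
    nlinarith [mul_nonneg (sub_nonneg.2 hnorm) (sub_nonneg.2 (pow_le_one₀ hρ0 hρ1 (n := 2)))]
  exact (pow_le_pow_iff_left₀ (norm_nonneg _) (by positivity) two_ne_zero).1 hsq

lemma norm_one_add_mul_div_one_sub_bounds {c ρ : ℝ} {u : ℂ} (hc : -1 ≤ c) (hρ0 : 0 ≤ ρ)
    (hρ1 : ρ < 1) (hu : ‖u‖ ≤ ρ) :
    (1 - c * ρ) / (1 + ρ) ≤ ‖(1 + c * u) / (1 - u)‖ ∧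
      ‖(1 + c * u) / (1 - u)‖ ≤ (1 + c * ρ) / (1 - ρ) := by
  have h1u : 1 - u ≠ 0 := one_sub_ne_zero_of_norm_lt_one (hu.trans_lt hρ1)
  have hρ2 : 0 < 1 - ρ ^ 2 := by nlinarith
  have hρ' : 1 - ρ ≠ 0 := by linarith
  set C : ℝ := (1 + c * ρ ^ 2) / (1 - ρ ^ 2) with hC_def
  -- the image of the disc `‖u‖ ≤ ρ` is the disc of centre `C` and radius `(1 + c) ρ / (1 - ρ²)`
  have hdist : ‖(1 + c * u) / (1 - u) - C‖ ≤ (1 + c) * ρ / (1 - ρ ^ 2) := by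
    have hid : (1 + c * u) / (1 - u) - C
        = (1 + c) * (u - (ρ : ℂ) ^ 2) / ((1 - u) * (1 - ρ ^ 2 : ℝ)) := by
      have : ((1 - ρ ^ 2 : ℝ) : ℂ) ≠ 0 := ofReal_ne_zero.2 hρ2.ne'
      simp only [hC_def, ofReal_div] at this ⊢
      field_simp
      push_cast
      ring
    rw [hid, norm_div, norm_mul, norm_mul, norm_real, Real.norm_of_nonneg hρ2.le,
      div_le_div_iff₀ (mul_pos (norm_pos_iff.2 h1u) hρ2) hρ2,
      show ‖(1 : ℂ) + c‖ = 1 + c from mod_cast Real.norm_of_nonneg (by linarith : 0 ≤ 1 + c)]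
    have := norm_sub_sq_le_mul_norm_one_sub hρ0 hρ1.le hu
    have h1c : 0 ≤ 1 + c := by linarith
    calc (1 + c) * ‖u - (ρ : ℂ) ^ 2‖ * (1 - ρ ^ 2)
        ≤ (1 + c) * (ρ * ‖1 - u‖) * (1 - ρ ^ 2) := by gcongr
      _ = _ := by ring
  have hC : ‖(C : ℂ)‖ = C := by
    rw [norm_real, Real.norm_of_nonneg]
    exact div_nonneg (by nlinarith) hρ2.le
  have := abs_le.1 ((abs_norm_sub_norm_le _ _).trans hdist)
  rw [hC] at this
  constructor
  · calc (1 - c * ρ) / (1 + ρ) = C - (1 + c) * ρ / (1 - ρ ^ 2) := by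
          rw [hC_def]
          field_simp
          ring
      _ ≤ _ := by linarith
  · calc _ ≤ C + (1 + c) * ρ / (1 - ρ ^ 2) := by linarith
      _ = (1 + c * ρ) / (1 - ρ) := by
          rw [hC_def]
          field_simp
          ring

lemma re_one_add_div_one_sub_bounds {s : ℝ} {u : ℂ} (hs : s < 1) (hu : ‖u‖ ≤ s) :
    (1 - s) / (1 + s) ≤ ((1 + u) / (1 - u)).re ∧ ((1 + u) / (1 - u)).re ≤ (1 + s) / (1 - s) := by
  have hu1 : ‖u‖ < 1 := hu.trans_lt hs
  have h1u : 1 - u ≠ 0 := one_sub_ne_zero_of_norm_lt_one hu1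
  have hre : ((1 + u) / (1 - u)).re = (1 - ‖u‖ ^ 2) / ‖1 - u‖ ^ 2 := by
    rw [div_re, ← add_div, Complex.sq_norm, Complex.sq_norm]
    simp only [normSq_apply, add_re, add_im, sub_re, sub_im, one_re, one_im]
    ring
  have hu1' : 1 - ‖u‖ ≠ 0 := by linarith
  have hpos : 0 < 1 - ‖u‖ ^ 2 := by nlinarith [norm_nonneg u]
  have hnorm0 : 0 < ‖1 - u‖ := norm_pos_iff.2 h1u
  have hupper : ‖1 - u‖ ≤ 1 + ‖u‖ := by simpa using norm_sub_le (1 : ℂ) u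
  have hlower : 1 - ‖u‖ ≤ ‖1 - u‖ := by simpa using norm_sub_norm_le (1 : ℂ) u
  rw [hre]
  constructor
  · calc (1 - s) / (1 + s) ≤ (1 - ‖u‖) / (1 + ‖u‖) := by
          rw [div_le_div_iff₀ (by linarith [norm_nonneg u]) (by linarith [norm_nonneg u])]
          nlinarith
      _ = (1 - ‖u‖ ^ 2) / (1 + ‖u‖) ^ 2 := by
          field_simp
          ring
      _ ≤ _ := by gcongr
  · calc (1 - ‖u‖ ^ 2) / ‖1 - u‖ ^ 2 ≤ (1 - ‖u‖ ^ 2) / (1 - ‖u‖) ^ 2 := by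
          gcongr
      _ = (1 + ‖u‖) / (1 - ‖u‖) := by
          field_simp
          ring
      _ ≤ (1 + s) / (1 - s) := by
          rw [div_le_div_iff₀ (by linarith) (by linarith)]
          nlinarith

lemma Function.Even.deriv_odd {𝕜 F : Type*} [NontriviallyNormedField 𝕜] [NormedAddCommGroup F]
    [NormedSpace 𝕜 F] {f : 𝕜 → F} (hf : f.Even) : (deriv f).Odd := fun x => by
  simpa [funext hf] using deriv_comp_neg f (-x)

lemma norm_le_norm_sq_of_even {F : ℂ → ℂ} (hd : DifferentiableOn ℂ F (ball 0 1))
    (hmaps : MapsTo F (ball 0 1) (ball 0 1)) (h0 : F 0 = 0) (heven : F.Even) {ζ : ℂ}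
    (hζ : ζ ∈ ball (0 : ℂ) 1) : ‖F ζ‖ ≤ ‖ζ‖ ^ 2 := by
  have hF : ∀ x, F x = x * dslope F 0 x := fun x => by
    simpa [h0] using (sub_smul_dslope F 0 x).symm
  have hschwarz : ∀ x ∈ ball (0 : ℂ) 1, ‖F x‖ ≤ ‖x‖ := fun x hx =>
    Complex.norm_le_norm_of_mapsTo_ball hd (hmaps.mono_right ball_subset_closedBall) h0
      (mem_ball_zero_iff.1 hx)
  -- `F / z` again satisfies Schwarz's lemma, because `F' (0) = 0` for even `F`
  have hslope_maps : MapsTo (dslope F 0) (ball 0 1) (closedBall 0 1) := by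
    intro x hx
    rw [mem_closedBall_zero_iff]
    rcases eq_or_ne x 0 with rfl | hx0
    · simp [dslope_same, heven.deriv_odd.map_zero]
    · have := hschwarz x hx
      rw [hF x, norm_mul] at this
      exact (mul_le_iff_le_one_right (norm_pos_iff.2 hx0)).1 this
  have hslope := Complex.norm_le_norm_of_mapsTo_ball
    ((differentiableOn_dslope (ball_mem_nhds _ one_pos)).2 hd) hslope_maps
    (by rw [dslope_same, heven.deriv_odd.map_zero]) (mem_ball_zero_iff.1 hζ)
  rw [hF ζ, norm_mul, sq]
  exact mul_le_mul_of_nonneg_left hslope (norm_nonneg ζ)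

lemma norm_sub_one_lt_norm_add_one {z : ℂ} (hz : 0 < z.re) : ‖z - 1‖ < ‖z + 1‖ := by
  rw [← sq_lt_sq₀ (norm_nonneg _) (norm_nonneg _), Complex.sq_norm, Complex.sq_norm]
  simp only [normSq_apply, sub_re, add_re, sub_im, add_im, one_re, one_im]
  nlinarith

lemma re_bounds_of_even_of_re_pos {p : ℂ → ℂ} (hd : DifferentiableOn ℂ p (ball 0 1))
    (h0 : p 0 = 1) (hre : ∀ ζ ∈ ball (0 : ℂ) 1, 0 < (p ζ).re) (heven : p.Even) {ζ : ℂ}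
    (hζ : ζ ∈ ball (0 : ℂ) 1) :
    (1 - ‖ζ‖ ^ 2) / (1 + ‖ζ‖ ^ 2) ≤ (p ζ).re ∧ (p ζ).re ≤ (1 + ‖ζ‖ ^ 2) / (1 - ‖ζ‖ ^ 2) := by
  have hp1 : ∀ x ∈ ball (0 : ℂ) 1, p x + 1 ≠ 0 := fun x hx h => by
    have := congrArg re h
    simp only [add_re, one_re, zero_re] at this
    linarith [hre x hx]
  set ω : ℂ → ℂ := fun x => (p x - 1) / (p x + 1) with hω_def
  have hω_maps : MapsTo ω (ball 0 1) (ball 0 1) := fun x hx => by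
    rw [mem_ball_zero_iff, hω_def, norm_div, div_lt_one (norm_pos_iff.2 (hp1 x hx))]
    exact norm_sub_one_lt_norm_add_one (hre x hx)
  have hω : ‖ω ζ‖ ≤ ‖ζ‖ ^ 2 := norm_le_norm_sq_of_even (F := ω)
    ((hd.sub_const 1).div (hd.add_const 1) hp1) hω_maps (by simp [ω, h0])
    (fun x => by simp only [ω, heven x]) hζ
  have hp : p ζ = (1 + ω ζ) / (1 - ω ζ) := by
    have := hp1 ζ hζ
    simp only [hω_def]
    field_simp
    ring
  rw [hp]
  exact re_one_add_div_one_sub_bounds (by simpa using hζ) hω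

lemma hasDerivAt_log_norm_comp_ofReal_mul {k : ℂ → ℂ} {z : ℂ} {t : ℝ}
    (hk : DifferentiableAt ℂ k (t * z)) (hk0 : k (t * z) ≠ 0) :
    HasDerivAt (fun s : ℝ => Real.log ‖k (s * z)‖) (z * logDeriv k (t * z)).re t := by
  have hline : HasDerivAt (fun s : ℝ => k (s * z)) (deriv k (t * z) * z) t :=
    (hk.hasDerivAt.comp (t : ℂ) (hasDerivAt_mul_const z)).comp_ofReal
  have hnorm : ‖k (t * z)‖ ^ 2 ≠ 0 := by positivity
  have hlog : (fun s : ℝ => Real.log ‖k (s * z)‖)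
      = fun s : ℝ => Real.log (‖k (s * z)‖ ^ 2) / 2 := by
    ext s
    rw [Real.log_pow]
    ring
  rw [hlog]
  refine ((hline.norm_sq.log hnorm).div_const 2).congr_deriv ?_
  simp only [logDeriv_apply, Complex.inner, Complex.sq_norm, div_re, div_im, mul_re, mul_im,
    conj_re, conj_im]
  ring

lemma sub_le_sub_of_hasDerivAt_le {F G F' G' : ℝ → ℝ} {a b : ℝ} (hab : a ≤ b)
    (hF : ∀ t ∈ Icc a b, HasDerivAt F (F' t) t) (hG : ∀ t ∈ Icc a b, HasDerivAt G (G' t) t)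
    (hle : ∀ t ∈ Ioo a b, F' t ≤ G' t) : F b - F a ≤ G b - G a := by
  have hmono : MonotoneOn (G - F) (Icc a b) := by
    have hd : ∀ t ∈ Icc a b, HasDerivAt (G - F) (G' t - F' t) t := fun t ht =>
      (hG t ht).sub (hF t ht)
    refine monotoneOn_of_hasDerivWithinAt_nonneg (f' := fun t => G' t - F' t)
      (convex_Icc a b) (fun t ht => (hd t ht).continuousAt.continuousWithinAt)
      (fun t ht => ?_) (fun t ht => ?_)
    · rw [interior_Icc] at ht
      exact (hd t (Ioo_subset_Icc_self ht)).hasDerivWithinAt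
    · rw [interior_Icc] at ht
      exact sub_nonneg.2 (hle t ht)
  have := hmono (left_mem_Icc.2 hab) (right_mem_Icc.2 hab) hab
  simp only [Pi.sub_apply] at this
  linarith

section growth

variable {k : ℂ → ℂ} {z : ℂ}

lemma ofReal_mul_mem_ball_zero_one {t : ℝ} (ht : t ∈ Icc (0 : ℝ) 1)
    (hz : z ∈ ball (0 : ℂ) 1) : (t : ℂ) * z ∈ ball (0 : ℂ) 1 := by
  rw [mem_ball_zero_iff, norm_mul, norm_real, Real.norm_of_nonneg ht.1]
  exact (mul_le_of_le_one_left (norm_nonneg z) ht.2).trans_lt (mem_ball_zero_iff.1 hz)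

lemma hasDerivAt_radial_log_norm (hd : DifferentiableOn ℂ k (ball 0 1))
    (hne : ∀ ζ ∈ ball (0 : ℂ) 1, k ζ ≠ 0) (hz : z ∈ ball (0 : ℂ) 1) {t : ℝ}
    (ht : t ∈ Icc (0 : ℝ) 1) :
    HasDerivAt (fun s : ℝ => Real.log ‖k (s * z)‖) (z * logDeriv k (t * z)).re t := by
  have hmem := ofReal_mul_mem_ball_zero_one ht hz
  exact hasDerivAt_log_norm_comp_ofReal_mul (hd.differentiableAt (isOpen_ball.mem_nhds hmem))
    (hne _ hmem)

lemma norm_le_of_re_one_add_mul_logDeriv_le (hd : DifferentiableOn ℂ k (ball 0 1))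
    (h0 : k 0 = 1) (hne : ∀ ζ ∈ ball (0 : ℂ) 1, k ζ ≠ 0)
    (hle : ∀ ζ ∈ ball (0 : ℂ) 1, (1 + ζ * logDeriv k ζ).re ≤ (1 + ‖ζ‖ ^ 2) / (1 - ‖ζ‖ ^ 2))
    (hz : z ∈ ball (0 : ℂ) 1) : ‖k z‖ ≤ 1 / (1 - ‖z‖ ^ 2) := by
  set r := ‖z‖
  have hr : r < 1 := mem_ball_zero_iff.1 hz
  have hr0 : 0 ≤ r := norm_nonneg z
  have hr2 : 0 < 1 - r ^ 2 := by nlinarith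
  have hpos : ∀ t ∈ Icc (0 : ℝ) 1, 0 < 1 - t ^ 2 * r ^ 2 := fun t ht => by
    nlinarith [mul_le_of_le_one_left (sq_nonneg r) (pow_le_one₀ (n := 2) ht.1 ht.2)]
  have hG : ∀ t ∈ Icc (0 : ℝ) 1, HasDerivAt (fun s : ℝ => -Real.log (1 - s ^ 2 * r ^ 2))
      (2 * t * r ^ 2 / (1 - t ^ 2 * r ^ 2)) t := fun t ht => by
    refine ((((hasDerivAt_pow 2 t).mul_const (r ^ 2)).const_sub 1).log
      (hpos t ht).ne').fun_neg.congr_deriv ?_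
    push_cast
    ring
  have hcomp := sub_le_sub_of_hasDerivAt_le zero_le_one
    (fun t ht => hasDerivAt_radial_log_norm hd hne hz ht) hG fun t ht => by
      have := hle _ (ofReal_mul_mem_ball_zero_one (Ioo_subset_Icc_self ht) hz)
      rw [norm_mul, norm_real, Real.norm_of_nonneg ht.1.le, mul_assoc, add_re, one_re,
        re_ofReal_mul] at this
      have ht2 : (1 + (t * r) ^ 2) / (1 - (t * r) ^ 2) - 1
          = t * (2 * t * r ^ 2 / (1 - t ^ 2 * r ^ 2)) := by
        have := (hpos t (Ioo_subset_Icc_self ht)).ne'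
        field_simp
        ring
      exact le_of_mul_le_mul_left (by linarith) ht.1
  simp only [ofReal_one, one_mul, ofReal_zero, zero_mul, h0, norm_one, Real.log_one, sub_zero,
    one_pow, ne_eq, OfNat.ofNat_ne_zero, not_false_eq_true, zero_pow, neg_zero] at hcomp
  rw [← Real.log_le_log_iff (norm_pos_iff.2 (hne z hz)) (one_div_pos.2 hr2),
    one_div, Real.log_inv]
  exact hcomp

lemma le_norm_of_le_re_one_add_mul_logDeriv (hd : DifferentiableOn ℂ k (ball 0 1))
    (h0 : k 0 = 1) (hne : ∀ ζ ∈ ball (0 : ℂ) 1, k ζ ≠ 0)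
    (hle : ∀ ζ ∈ ball (0 : ℂ) 1, (1 - ‖ζ‖ ^ 2) / (1 + ‖ζ‖ ^ 2) ≤ (1 + ζ * logDeriv k ζ).re)
    (hz : z ∈ ball (0 : ℂ) 1) : 1 / (1 + ‖z‖ ^ 2) ≤ ‖k z‖ := by
  set r := ‖z‖
  have hpos : ∀ t : ℝ, 0 < 1 + t ^ 2 * r ^ 2 := fun t => by positivity
  have hG : ∀ t ∈ Icc (0 : ℝ) 1, HasDerivAt (fun s : ℝ => -Real.log (1 + s ^ 2 * r ^ 2))
      (-(2 * t * r ^ 2 / (1 + t ^ 2 * r ^ 2))) t := fun t _ => by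
    refine ((((hasDerivAt_pow 2 t).mul_const (r ^ 2)).const_add 1).log
      (hpos t).ne').fun_neg.congr_deriv ?_
    push_cast
    ring
  have hcomp := sub_le_sub_of_hasDerivAt_le zero_le_one hG
    (fun t ht => hasDerivAt_radial_log_norm hd hne hz ht) fun t ht => by
      have := hle _ (ofReal_mul_mem_ball_zero_one (Ioo_subset_Icc_self ht) hz)
      rw [norm_mul, norm_real, Real.norm_of_nonneg ht.1.le, mul_assoc, add_re, one_re,
        re_ofReal_mul] at this
      have ht2 : (1 - (t * r) ^ 2) / (1 + (t * r) ^ 2) - 1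
          = t * -(2 * t * r ^ 2 / (1 + t ^ 2 * r ^ 2)) := by
        have := (hpos t).ne'
        field_simp
        ring
      exact le_of_mul_le_mul_left (by linarith) ht.1
  simp only [ofReal_one, one_mul, ofReal_zero, zero_mul, h0, norm_one, Real.log_one, sub_zero,
    one_pow, ne_eq, OfNat.ofNat_ne_zero, not_false_eq_true, zero_pow, neg_zero, add_zero] at hcomp
  rw [← Real.log_le_log_iff (one_div_pos.2 (by positivity)) (norm_pos_iff.2 (hne z hz)),
    one_div, Real.log_inv]
  exact hcomp

end growth

noncomputable def dslopeMulNeg (g : ℂ → ℂ) (z : ℂ) : ℂ := dslope g 0 z * dslope g 0 (-z)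

section dslopeMulNeg

variable {g : ℂ → ℂ}

lemma eq_mul_dslope_zero (hg0 : g 0 = 0) (z : ℂ) : g z = z * dslope g 0 z := by
  simpa [hg0] using (sub_smul_dslope g 0 z).symm

lemma mul_comp_neg_eq_neg_sq_mul_dslopeMulNeg (hg0 : g 0 = 0) (z : ℂ) :
    g z * g (-z) = -(z ^ 2 * dslopeMulNeg g z) := by
  rw [eq_mul_dslope_zero hg0 z, eq_mul_dslope_zero hg0 (-z), dslopeMulNeg]
  ring

lemma dslope_zero_ne_zero (hg0 : g 0 = 0) {z : ℂ} (hgz : g z ≠ 0) : dslope g 0 z ≠ 0 :=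
  fun h => hgz (by rw [eq_mul_dslope_zero hg0 z, h, mul_zero])

lemma dslopeMulNeg_zero (g : ℂ → ℂ) : dslopeMulNeg g 0 = deriv g 0 ^ 2 := by
  simp [dslopeMulNeg, dslope_same, sq]

lemma dslopeMulNeg_even (g : ℂ → ℂ) : (dslopeMulNeg g).Even := fun z => by
  simp only [dslopeMulNeg, neg_neg, mul_comm]

lemma DifferentiableOn.dslopeMulNeg (hg : DifferentiableOn ℂ g (ball 0 1)) :
    DifferentiableOn ℂ (dslopeMulNeg g) (ball 0 1) := by
  have hG := (differentiableOn_dslope (ball_mem_nhds (0 : ℂ) one_pos)).2 hg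
  exact hG.mul (hG.comp (differentiableOn_neg _) fun x hx => by simpa using hx)

lemma mul_logDeriv_eq_one_add_mul_logDeriv_dslope (hg0 : g 0 = 0) {z : ℂ} (hz : z ≠ 0)
    (hgz : g z ≠ 0) (hdg : DifferentiableAt ℂ g z) :
    z * logDeriv g z = 1 + z * logDeriv (dslope g 0) z := by
  have hg : g = fun x => id x * dslope g 0 x := funext (eq_mul_dslope_zero hg0)
  rw [congrArg (logDeriv · z) hg, logDeriv_mul z hz (dslope_zero_ne_zero hg0 hgz)
    differentiableAt_id ((differentiableAt_dslope_of_ne hz).2 hdg), logDeriv_id]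
  field_simp

lemma dslopeMulNeg_ne_zero (hg0 : g 0 = 0) {z : ℂ} (hgz : g z ≠ 0) (hgz' : g (-z) ≠ 0) :
    dslopeMulNeg g z ≠ 0 :=
  mul_ne_zero (dslope_zero_ne_zero hg0 hgz) (dslope_zero_ne_zero hg0 hgz')

lemma one_add_mul_logDeriv_dslopeMulNeg (hg0 : g 0 = 0) {z : ℂ} (hz : z ≠ 0) (hgz : g z ≠ 0)
    (hgz' : g (-z) ≠ 0) (hdg : DifferentiableAt ℂ g z) (hdg' : DifferentiableAt ℂ g (-z)) :
    1 + z * logDeriv (dslopeMulNeg g) z = z * logDeriv g z + (-z) * logDeriv g (-z) - 1 := by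
  have hdG : ∀ x ≠ 0, DifferentiableAt ℂ g x → DifferentiableAt ℂ (dslope g 0) x :=
    fun x hx => (differentiableAt_dslope_of_ne hx).2
  have hneg : logDeriv (fun x => dslope g 0 (-x)) z = -logDeriv (dslope g 0) (-z) := by
    rw [← Function.comp_def, logDeriv_comp (hdG _ (neg_ne_zero.2 hz) hdg')
      differentiable_neg.differentiableAt, deriv_neg', mul_neg_one]
  rw [mul_logDeriv_eq_one_add_mul_logDeriv_dslope hg0 hz hgz hdg,
    mul_logDeriv_eq_one_add_mul_logDeriv_dslope hg0 (neg_ne_zero.2 hz) hgz' hdg',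
    show dslopeMulNeg g = fun x => dslope g 0 x * dslope g 0 (-x) from rfl,
    logDeriv_mul (g := fun x => dslope g 0 (-x)) z (dslope_zero_ne_zero hg0 hgz)
      (dslope_zero_ne_zero hg0 hgz') (hdG z hz hdg)
      ((hdG (-z) (neg_ne_zero.2 hz) hdg').comp z differentiable_neg.differentiableAt), hneg]
  ring

end dslopeMulNeg

-- with Lean's `x / 0 = 0`, the quotient vanishes at a zero of `g`
lemma ne_zero_of_re_mul_deriv_div_pos {g : ℂ → ℂ} {z : ℂ} (h : 0 < (z * deriv g z / g z).re) :
    g z ≠ 0 := fun hgz => by simp [hgz] at h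

lemma norm_dslopeMulNeg_bounds {g : ℂ → ℂ} (hg : DifferentiableOn ℂ g (ball 0 1))
    (hg0 : g 0 = 0) (hg1 : deriv g 0 = 1)
    (hstar : ∀ z ∈ ball (0 : ℂ) 1, z ≠ 0 → 1 / 2 < (z * deriv g z / g z).re)
    {z : ℂ} (hz : z ∈ ball (0 : ℂ) 1) :
    1 / (1 + ‖z‖ ^ 2) ≤ ‖dslopeMulNeg g z‖ ∧ ‖dslopeMulNeg g z‖ ≤ 1 / (1 - ‖z‖ ^ 2) := by
  have hneg : ∀ ζ ∈ ball (0 : ℂ) 1, -ζ ∈ ball (0 : ℂ) 1 := fun ζ hζ => by simpa using hζ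
  have hdg : ∀ ζ ∈ ball (0 : ℂ) 1, DifferentiableAt ℂ g ζ := fun ζ hζ =>
    hg.differentiableAt (isOpen_ball.mem_nhds hζ)
  have hgne : ∀ ζ ∈ ball (0 : ℂ) 1, ζ ≠ 0 → g ζ ≠ 0 := fun ζ hζ hζ0 =>
    ne_zero_of_re_mul_deriv_div_pos (one_half_pos.trans (hstar ζ hζ hζ0))
  have hgne' : ∀ ζ ∈ ball (0 : ℂ) 1, ζ ≠ 0 → g (-ζ) ≠ 0 := fun ζ hζ hζ0 =>
    hgne _ (hneg ζ hζ) (neg_ne_zero.2 hζ0)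
  set K := dslopeMulNeg g
  have hK0 : K 0 = 1 := by simp [K, dslopeMulNeg_zero, hg1]
  have hKne : ∀ ζ ∈ ball (0 : ℂ) 1, K ζ ≠ 0 := fun ζ hζ => by
    rcases eq_or_ne ζ 0 with rfl | hζ0
    · exact hK0 ▸ one_ne_zero
    · exact dslopeMulNeg_ne_zero hg0 (hgne ζ hζ hζ0) (hgne' ζ hζ hζ0)
  have hKd : DifferentiableOn ℂ K (ball 0 1) := hg.dslopeMulNeg
  have hre : ∀ ζ ∈ ball (0 : ℂ) 1, 0 < (1 + ζ * logDeriv K ζ).re := fun ζ hζ => by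
    rcases eq_or_ne ζ 0 with rfl | hζ0
    · simp
    rw [one_add_mul_logDeriv_dslopeMulNeg hg0 hζ0 (hgne ζ hζ hζ0) (hgne' ζ hζ hζ0) (hdg ζ hζ)
      (hdg _ (hneg ζ hζ))]
    have h1 := hstar ζ hζ hζ0
    have h2 := hstar _ (hneg ζ hζ) (neg_ne_zero.2 hζ0)
    simp only [mul_div_assoc, ← logDeriv_apply] at h1 h2
    simp only [sub_re, add_re, one_re]
    linarith
  have hpd : DifferentiableOn ℂ (fun ζ => 1 + ζ * logDeriv K ζ) (ball 0 1) :=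
    (differentiableOn_const 1).add (differentiableOn_id.mul
      ((hKd.deriv isOpen_ball).div hKd hKne))
  have hpeven : (fun ζ => 1 + ζ * logDeriv K ζ).Even := fun ζ => by
    simp only [logDeriv_apply, (dslopeMulNeg_even g).deriv_odd ζ, dslopeMulNeg_even g ζ, K]
    ring
  have hp := fun ζ (hζ : ζ ∈ ball (0 : ℂ) 1) =>
    re_bounds_of_even_of_re_pos hpd (by simp) hre hpeven hζ
  exact ⟨le_norm_of_le_re_one_add_mul_logDeriv hKd hK0 hKne (fun ζ hζ => (hp ζ hζ).1) hz,
    norm_le_of_re_one_add_mul_logDeriv_le hKd hK0 hKne (fun ζ hζ => (hp ζ hζ).2) hz⟩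

theorem distortion_Ks_gamma_general (γ : ℝ) (hγ1 : γ < 1)
    (f g w : ℂ → ℂ)
    (hf1 : deriv f 0 = 1)
    (hg : AnalyticOnNhd ℂ g (ball (0:ℂ) 1)) (hg0 : g 0 = 0) (hg1 : deriv g 0 = 1)
    (hstar : ∀ z ∈ ball (0:ℂ) 1, z ≠ 0 → 1 / 2 < (z * deriv g z / g z).re)
    (hw : AnalyticOnNhd ℂ w (ball (0:ℂ) 1)) (hw0 : w 0 = 0)
    (hwb : ∀ z ∈ ball (0:ℂ) 1, ‖w z‖ < 1)
    (hsub : ∀ z ∈ ball (0:ℂ) 1, z ≠ 0 →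
      -(z ^ 2 * deriv f z) / (g z * g (-z))
        = (1 + (1 - 2 * (γ : ℂ)) * w z) / (1 - w z))
    (r : ℝ) (hr : r < 1) (z : ℂ) (hz : ‖z‖ = r) :
    (1 - (1 - 2 * γ) * r) / ((1 + r) * (1 + r ^ 2)) ≤ ‖deriv f z‖ ∧
    ‖deriv f z‖ ≤ (1 + (1 - 2 * γ) * r) / ((1 - r) * (1 - r ^ 2)) := by
  rcases eq_or_ne z 0 with rfl | hz0
  · obtain rfl : r = 0 := by simpa using hz.symm
    norm_num [hf1]
  subst hz
  have hzb : z ∈ ball (0 : ℂ) 1 := mem_ball_zero_iff.2 hr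
  have hK := norm_dslopeMulNeg_bounds hg.differentiableOn hg0 hg1 hstar hzb
  have hwz : ‖w z‖ ≤ ‖z‖ := Complex.norm_le_norm_of_mapsTo_ball hw.differentiableOn
    (fun x hx => mem_closedBall_zero_iff.2 (hwb x hx).le) hw0 hr
  have hφ := norm_one_add_mul_div_one_sub_bounds (c := 1 - 2 * γ) (by linarith) (norm_nonneg z)
    hr hwz
  have hf' : deriv f z = dslopeMulNeg g z * ((1 + (1 - 2 * (γ : ℂ)) * w z) / (1 - w z)) := by
    have hKz : dslopeMulNeg g z ≠ 0 :=
      norm_pos_iff.1 ((one_div_pos.2 (by positivity)).trans_le hK.1)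
    rw [← hsub z hzb hz0, mul_comp_neg_eq_neg_sq_mul_dslopeMulNeg hg0]
    field_simp
  push_cast at hφ
  rw [hf', norm_mul]
  constructor
  · calc _ = 1 / (1 + ‖z‖ ^ 2) * ((1 - (1 - 2 * γ) * ‖z‖) / (1 + ‖z‖)) := by
          field_simp
      _ ≤ _ := mul_le_mul_of_nonneg hK.1 hφ.1 (by positivity) (norm_nonneg _)
  · calc _ ≤ 1 / (1 - ‖z‖ ^ 2) * ((1 + (1 - 2 * γ) * ‖z‖) / (1 - ‖z‖)) :=
          mul_le_mul_of_nonneg hK.2 hφ.2 (norm_nonneg _)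
            (div_nonneg (by nlinarith [norm_nonneg z]) (by linarith))
      _ = _ := by
          field_simp

theorem distortion_Ks_gamma (γ : ℝ) (hγ0 : 0 ≤ γ) (hγ1 : γ < 1)
    (f g w : ℂ → ℂ)
    (hf : AnalyticOnNhd ℂ f (ball (0:ℂ) 1)) (hf0 : f 0 = 0) (hf1 : deriv f 0 = 1)
    (hg : AnalyticOnNhd ℂ g (ball (0:ℂ) 1)) (hg0 : g 0 = 0) (hg1 : deriv g 0 = 1)
    (hstar : ∀ z ∈ ball (0:ℂ) 1, z ≠ 0 → 1 / 2 < (z * deriv g z / g z).re)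
    (hw : AnalyticOnNhd ℂ w (ball (0:ℂ) 1)) (hw0 : w 0 = 0)
    (hwb : ∀ z ∈ ball (0:ℂ) 1, ‖w z‖ < 1)
    (hsub : ∀ z ∈ ball (0:ℂ) 1, z ≠ 0 →
      -(z ^ 2 * deriv f z) / (g z * g (-z))
        = (1 + (1 - 2 * (γ : ℂ)) * w z) / (1 - w z))
    (r : ℝ) (hr : r < 1) (z : ℂ) (hz : ‖z‖ = r) :
    (1 - (1 - 2 * γ) * r) / ((1 + r) * (1 + r ^ 2)) ≤ ‖deriv f z‖ ∧
    ‖deriv f z‖ ≤ (1 + (1 - 2 * γ) * r) / ((1 - r) * (1 - r ^ 2)) :=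
  distortion_Ks_gamma_general γ hγ1 f g w hf1 hg hg0 hg1 hstar hw hw0 hwb hsub r hr z hz
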